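/- arXiv:2411.07061 — 2 statements merged into one kernel-verified Lean document; each statement's English description precedes it below -/
import Mathlib

section
/- For β ∈ (0,1) and integers n ≥ t ≥ 1, define λ_{n,t} = ∑_{i=t}^n ∑_{j=1}^{t-1} q_{n,i} q_{n,j} (i-j), where q_{n,s} = β^{n-s}(1-β)/(1-β^n). Then λ_{n,t} = (a β^a (1-β^n) - n β^n (1-β^a))/(1-β^n)^2 where a = n - t + 1, and in particular λ_{n,t} ≤ (n-t+1) β^{n-t+1}/(1-β^n). -/
set_option maxHeartbeats 1600000

private lemma geomG (x : ℝ) (hx : x ≠ 1) (m : ℕ) :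
    ∑ u ∈ Finset.range m, x ^ u = (1 - x ^ m) / (1 - x) := by
  have h : x - 1 ≠ 0 := sub_ne_zero.mpr hx
  have h' : (1 : ℝ) - x ≠ 0 := sub_ne_zero.mpr (Ne.symm hx)
  rw [geom_sum_eq hx]
  field_simp
  ring

private lemma geomH (x : ℝ) (hx : x ≠ 1) (m : ℕ) :
    ∑ u ∈ Finset.range m, (u : ℝ) * x ^ u
      = (x - (m : ℝ) * x ^ m + ((m : ℝ) - 1) * x ^ (m + 1)) / (1 - x) ^ 2 := by
  have h1 : (1 : ℝ) - x ≠ 0 := sub_ne_zero.mpr (Ne.symm hx)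
  induction m with
  | zero => simp
  | succ k ih =>
      rw [Finset.sum_range_succ, ih]
      field_simp
      push_cast
      ring

/-- Closed form and bound for `λ_{n,t}` from Proposition A.2. -/
theorem stmt_5 (β : ℝ) (hβ : β ∈ Set.Ioo (0:ℝ) 1) (n t : ℕ) (ht : 1 ≤ t) (htn : t ≤ n) :
    (∑ i ∈ Finset.Icc t n, ∑ j ∈ Finset.Icc 1 (t - 1),
        (β ^ (n - i) * (1 - β) / (1 - β ^ n)) * (β ^ (n - j) * (1 - β) / (1 - β ^ n)) *
          ((i : ℝ) - (j : ℝ)) =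
      ((n - t + 1 : ℝ) * β ^ (n - t + 1) * (1 - β ^ n) -
        (n : ℝ) * β ^ n * (1 - β ^ (n - t + 1))) / (1 - β ^ n) ^ 2) ∧
    (∑ i ∈ Finset.Icc t n, ∑ j ∈ Finset.Icc 1 (t - 1),
        (β ^ (n - i) * (1 - β) / (1 - β ^ n)) * (β ^ (n - j) * (1 - β) / (1 - β ^ n)) *
          ((i : ℝ) - (j : ℝ)) ≤
      (n - t + 1 : ℝ) * β ^ (n - t + 1) / (1 - β ^ n)) := by
  obtain ⟨hβ0, hβ1⟩ := hβ
  have hβne : β ≠ 1 := ne_of_lt hβ1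
  have hb : (1:ℝ) - β ≠ 0 := sub_ne_zero.mpr (Ne.symm hβne)
  have hbn1 : β ^ n < 1 := pow_lt_one₀ hβ0.le hβ1 (by omega)
  have hbn0 : (0:ℝ) < β ^ n := pow_pos hβ0 n
  have hbnpos : (0:ℝ) < 1 - β ^ n := by linarith
  have hbnne : (1:ℝ) - β ^ n ≠ 0 := ne_of_gt hbnpos
  set a := n - t + 1 with ha
  set m := t - 1 with hm
  have ham : a + m = n := by omega
  have hpow : β ^ n = β ^ a * β ^ m := by rw [← pow_add, ham]
  have hna : (n:ℝ) = (a:ℝ) + (m:ℝ) := by exact_mod_cast congrArg (Nat.cast (R := ℝ)) ham.symm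
  have har : ((n:ℝ) - (t:ℝ) + 1) = (a:ℝ) := by
    rw [ha]
    push_cast [Nat.cast_sub htn]
    ring
  have key : (∑ i ∈ Finset.Icc t n, ∑ j ∈ Finset.Icc 1 m,
        (β ^ (n - i) * (1 - β) / (1 - β ^ n)) * (β ^ (n - j) * (1 - β) / (1 - β ^ n)) *
          ((i : ℝ) - (j : ℝ))) =
      (((n:ℝ) - t + 1) * β ^ a * (1 - β ^ n) -
        (n : ℝ) * β ^ n * (1 - β ^ a)) / (1 - β ^ n) ^ 2 := by
    have step1 : (∑ i ∈ Finset.Icc t n, ∑ j ∈ Finset.Icc 1 m,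
          (β ^ (n - i) * (1 - β) / (1 - β ^ n)) * (β ^ (n - j) * (1 - β) / (1 - β ^ n)) *
            ((i : ℝ) - (j : ℝ))) =
        ∑ u ∈ Finset.range a, ∑ v ∈ Finset.range m,
          (β ^ u * (1 - β) / (1 - β ^ n)) * (β ^ (a + v) * (1 - β) / (1 - β ^ n)) *
            ((a:ℝ) + (v:ℝ) - (u:ℝ)) := by
      rw [← Finset.Ico_add_one_right_eq_Icc, Finset.sum_Ico_eq_sum_range]
      have hcard : n + 1 - t = a := by omega
      rw [hcard, ← Finset.sum_range_reflect]
      refine Finset.sum_congr rfl fun u hu => ?_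
      rw [← Finset.Ico_add_one_right_eq_Icc, Finset.sum_Ico_eq_sum_range]
      have hcard2 : m + 1 - 1 = m := by omega
      rw [hcard2, ← Finset.sum_range_reflect]
      refine Finset.sum_congr rfl fun v hv => ?_
      simp only [Finset.mem_range] at hu hv
      have h1 : n - (t + (a - 1 - u)) = u := by omega
      have h2 : n - (1 + (m - 1 - v)) = a + v := by omega
      have h3 : ((t + (a - 1 - u) : ℕ) : ℝ) = (n:ℝ) - (u:ℝ) := by
        have hun : u ≤ n := by omega
        have he : t + (a - 1 - u) = n - u := by omega
        rw [he, Nat.cast_sub hun]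
      have h4 : ((1 + (m - 1 - v) : ℕ) : ℝ) = (m:ℝ) - (v:ℝ) := by
        have hvm : v ≤ m := by omega
        have he : 1 + (m - 1 - v) = m - v := by omega
        rw [he, Nat.cast_sub hvm]
      rw [h1, h2, h3, h4, hna]
      ring
    rw [step1]
    have gm := geomG β hβne m
    have ga := geomG β hβne a
    have hhm := geomH β hβne m
    have hha := geomH β hβne a
    have inner : ∀ u : ℕ, (∑ v ∈ Finset.range m,
          (β ^ u * (1 - β) / (1 - β ^ n)) * (β ^ (a + v) * (1 - β) / (1 - β ^ n)) *
            ((a:ℝ) + (v:ℝ) - (u:ℝ))) =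
        ((β ^ u * (1 - β) / (1 - β ^ n)) * (β ^ a * (1 - β) / (1 - β ^ n)) * ((a:ℝ) - u)) *
          ((1 - β ^ m) / (1 - β)) +
        ((β ^ u * (1 - β) / (1 - β ^ n)) * (β ^ a * (1 - β) / (1 - β ^ n))) *
          ((β - (m : ℝ) * β ^ m + ((m : ℝ) - 1) * β ^ (m + 1)) / (1 - β) ^ 2) := by
      intro u
      rw [← gm, ← hhm, Finset.mul_sum, Finset.mul_sum, ← Finset.sum_add_distrib]
      refine Finset.sum_congr rfl fun v _ => ?_
      rw [pow_add]
      ring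
    rw [Finset.sum_congr rfl fun u _ => inner u]
    have outer : (∑ u ∈ Finset.range a,
        (((β ^ u * (1 - β) / (1 - β ^ n)) * (β ^ a * (1 - β) / (1 - β ^ n)) * ((a:ℝ) - u)) *
          ((1 - β ^ m) / (1 - β)) +
        ((β ^ u * (1 - β) / (1 - β ^ n)) * (β ^ a * (1 - β) / (1 - β ^ n))) *
          ((β - (m : ℝ) * β ^ m + ((m : ℝ) - 1) * β ^ (m + 1)) / (1 - β) ^ 2))) =
        ((1 - β ^ a) / (1 - β)) *
          (((1 - β) / (1 - β ^ n)) * (β ^ a * (1 - β) / (1 - β ^ n)) *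
            ((a:ℝ) * ((1 - β ^ m) / (1 - β)) +
              ((β - (m : ℝ) * β ^ m + ((m : ℝ) - 1) * β ^ (m + 1)) / (1 - β) ^ 2))) -
        ((β - (a : ℝ) * β ^ a + ((a : ℝ) - 1) * β ^ (a + 1)) / (1 - β) ^ 2) *
          (((1 - β) / (1 - β ^ n)) * (β ^ a * (1 - β) / (1 - β ^ n)) *
            ((1 - β ^ m) / (1 - β))) := by
      rw [← ga, ← hha, Finset.sum_mul, Finset.sum_mul, ← Finset.sum_sub_distrib]
      refine Finset.sum_congr rfl fun u _ => ?_
      ring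
    rw [outer, har, hpow, hna]
    have hbnne' : (1:ℝ) - β ^ a * β ^ m ≠ 0 := by rw [← hpow]; exact hbnne
    field_simp
    ring
  refine ⟨key, ?_⟩
  rw [key, har]
  have hba0 : (0:ℝ) < β ^ a := pow_pos hβ0 a
  have hba1 : β ^ a ≤ 1 := pow_le_one₀ hβ0.le hβ1.le
  rw [div_le_div_iff₀ (by positivity) hbnpos]
  have hnn : (0:ℝ) ≤ (n:ℝ) := Nat.cast_nonneg n
  nlinarith [mul_nonneg (mul_nonneg hnn hbn0.le) (sub_nonneg.mpr hba1), sq_nonneg (1 - β ^ n), mul_pos hbnpos hbnpos]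
end

section
/- Discounted regret bound for regularized OMD: suppose g_1,...,g_T ∈ ℝ^d with E‖g_t‖² ≤ G² + σ² (deterministic version: ‖g_t‖² ≤ (G+σ)² suffices), u_1 = 0, and u_{t+1} = (β/(1+ημ))(u_t - η g_t) for β ∈ (0,1), μ ≥ 0, η = 2‖u‖√(1-β)/(G+σ). Then for the losses ℓ_t(v) = ⟨g_t, v⟩ + (μ/2)‖v‖², the discounted regret ∑_{t=1}^T β^{T-t}(ℓ_t(u_t) - ℓ_t(u)) ≤ 2‖u‖(G+σ)/(β√(1-β)) + (μ/2)‖u‖² in expectation. -/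
open scoped RealInnerProductSpace

set_option maxHeartbeats 2000000 in
/-- Discounted regret bound for regularized discounted OMD (Lemma 3.6, deterministic form). -/
theorem stmt_14 (d : ℕ) (β μ G σ η : ℝ) (hβ : β ∈ Set.Ioo (0:ℝ) 1) (hμ : 0 ≤ μ)
    (hG : 0 < G) (hσ : 0 < σ) (T : ℕ) (hT : 1 ≤ T)
    (u : EuclideanSpace ℝ (Fin d)) (g : ℕ → EuclideanSpace ℝ (Fin d))
    (hg : ∀ t, ‖g t‖ ^ 2 ≤ G ^ 2 + σ ^ 2)
    (hη : η = (2 / (G + σ)) * ‖u‖ * Real.sqrt (1 - β))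
    (U : ℕ → EuclideanSpace ℝ (Fin d)) (hU1 : U 1 = 0)
    (hUrec : ∀ t, U (t + 1) = (β / (1 + η * μ)) • (U t - η • g t)) :
    ∑ t ∈ Finset.Icc 1 T, β ^ (T - t) *
        ((⟪g t, U t⟫ + (μ / 2) * ‖U t‖ ^ 2) - (⟪g t, u⟫ + (μ / 2) * ‖u‖ ^ 2)) ≤
      2 * ‖u‖ * (G + σ) / (β * Real.sqrt (1 - β)) + (μ / 2) * ‖u‖ ^ 2 := by
  obtain ⟨hβ0, hβ1⟩ := hβ
  have hβne : β ≠ 0 := ne_of_gt hβ0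
  have h1β : (0:ℝ) < 1 - β := by linarith
  have hGσ : (0:ℝ) < G + σ := by linarith
  set s : ℝ := Real.sqrt (1 - β) with hs
  have hs0 : 0 < s := Real.sqrt_pos.mpr h1β
  have hs2 : s ^ 2 = 1 - β := Real.sq_sqrt h1β.le
  -- trivial case u = 0
  by_cases hu : u = 0
  · subst hu
    have hη0 : η = 0 := by simp [hη]
    have hU0 : ∀ t, 1 ≤ t → U t = 0 := by
      intro t ht
      induction t, ht using Nat.le_induction with
      | base => exact hU1
      | succ n hn ih => rw [hUrec n, ih, hη0]; simp
    have hsum : ∑ t ∈ Finset.Icc 1 T, β ^ (T - t) *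
        ((⟪g t, U t⟫ + (μ / 2) * ‖U t‖ ^ 2) - (⟪g t, (0:EuclideanSpace ℝ (Fin d))⟫ + (μ / 2) * ‖(0:EuclideanSpace ℝ (Fin d))‖ ^ 2)) = 0 := by
      apply Finset.sum_eq_zero
      intro t ht
      rw [hU0 t (Finset.mem_Icc.mp ht).1]
      simp
    rw [hsum]
    simp
  -- main case
  have hu0 : 0 < ‖u‖ := norm_pos_iff.mpr hu
  have hη0 : 0 < η := by
    rw [hη]; positivity
  have hηne : η ≠ 0 := ne_of_gt hη0
  set N : ℝ := 1 + η * μ with hN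
  have hN1 : 1 ≤ N := by
    have : 0 ≤ η * μ := by positivity
    simp only [hN]; linarith
  have hN0 : 0 < N := by linarith
  have hNne : N ≠ 0 := ne_of_gt hN0
  have hNβ : 0 < N - β := by linarith
  -- potential
  set W : ℕ → ℝ := fun t => N / (2 * η * β) * ‖U t - β • u‖ ^ 2
      + N * (N - 1) / (2 * η * β) * ‖U t‖ ^ 2 with hW
  have hW0 : ∀ t, 0 ≤ W t := by
    intro t
    have h1 : 0 ≤ N - 1 := by linarith
    simp only [hW]
    positivity
  set Q : ℝ := (1 - β) * N * ‖u‖ ^ 2 / (2 * η) + η / 2 * (G ^ 2 + σ ^ 2) with hQ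
  -- norm expansion helpers
  have eC : ∀ (a : ℝ) (v : EuclideanSpace ℝ (Fin d)), ‖a • v‖ ^ 2 = a ^ 2 * ‖v‖ ^ 2 := by
    intro a v
    rw [norm_smul, Real.norm_eq_abs, mul_pow, sq_abs]
  -- per-step inequality
  have hstep : ∀ t : ℕ,
      (⟪g t, U t⟫ + (μ / 2) * ‖U t‖ ^ 2) - (⟪g t, u⟫ + (μ / 2) * ‖u‖ ^ 2)
        ≤ Q + W t - (1 / β) * W (t + 1) := by
    intro t
    set x : EuclideanSpace ℝ (Fin d) := U t with hx
    set gg : EuclideanSpace ℝ (Fin d) := g t with hgg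
    have hUr : U (t + 1) = (β / N) • (x - η • gg) := hUrec t
    have eA : ‖x - η • gg‖ ^ 2 = ‖x‖ ^ 2 - 2 * (η * ⟪gg, x⟫) + η ^ 2 * ‖gg‖ ^ 2 := by
      rw [norm_sub_sq_real, real_inner_smul_right, eC, real_inner_comm x gg]
    have eB : ⟪x - η • gg, u⟫ = ⟪x, u⟫ - η * ⟪gg, u⟫ := by
      rw [inner_sub_left, real_inner_smul_left]
    have eW1 : W (t + 1) = β / (2 * η) * (‖x‖ ^ 2 - 2 * (η * ⟪gg, x⟫) + η ^ 2 * ‖gg‖ ^ 2)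
        - β / η * (⟪x, u⟫ - η * ⟪gg, u⟫) + N * β / (2 * η) * ‖u‖ ^ 2 := by
      simp only [hW, hUr]
      rw [norm_sub_sq_real, real_inner_smul_right, real_inner_smul_left, eB, eC, eC, eA]
      field_simp
      ring
    have eWt : W t = N / (2 * η * β) * (‖x‖ ^ 2 - 2 * (β * ⟪x, u⟫) + β ^ 2 * ‖u‖ ^ 2)
        + N * (N - 1) / (2 * η * β) * ‖x‖ ^ 2 := by
      simp only [hW]
      rw [norm_sub_sq_real, real_inner_smul_right, eC]
    have key : (⟪gg, x⟫ + (μ / 2) * ‖x‖ ^ 2) - (⟪gg, u⟫ + (μ / 2) * ‖u‖ ^ 2)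
        + (1 / β) * W (t + 1) - W t
        = -(N * (N - β) / (2 * η * β)) * ‖x‖ ^ 2 + μ * ⟪x, u⟫
          + ((1 - β) * N / (2 * η) - μ / 2) * ‖u‖ ^ 2 + η / 2 * ‖gg‖ ^ 2 := by
      rw [eW1, eWt, hN]
      field_simp
      ring
    have young : μ * ⟪x, u⟫ ≤ N * (N - β) / (2 * η * β) * ‖x‖ ^ 2 + μ / 2 * ‖u‖ ^ 2 := by
      have hCS : μ * ⟪x, u⟫ ≤ μ * (‖x‖ * ‖u‖) :=
        mul_le_mul_of_nonneg_left (real_inner_le_norm x u) hμ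
      have h2c1 : μ * (2 * η * β) ≤ 2 * (N * (N - β)) := by
        have hexp : 2 * (N * (N - β)) - μ * (2 * η * β) = 2 * ((N - β) ^ 2 + β * (1 - β)) := by
          rw [hN]; ring
        nlinarith [sq_nonneg (N - β)]
      have hc1 : μ / 2 ≤ N * (N - β) / (2 * η * β) := by
        rw [div_le_div_iff₀ (by norm_num) (by positivity)]
        linarith
      have h3 : μ * (‖x‖ * ‖u‖) ≤ μ / 2 * ‖x‖ ^ 2 + μ / 2 * ‖u‖ ^ 2 := by
        nlinarith [mul_nonneg hμ (sq_nonneg (‖x‖ - ‖u‖))]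
      have h4 : μ / 2 * ‖x‖ ^ 2 ≤ N * (N - β) / (2 * η * β) * ‖x‖ ^ 2 :=
        mul_le_mul_of_nonneg_right hc1 (sq_nonneg ‖x‖)
      linarith
    have hZ : η / 2 * ‖gg‖ ^ 2 ≤ η / 2 * (G ^ 2 + σ ^ 2) :=
      mul_le_mul_of_nonneg_left (hg t) (by positivity)
    have : (⟪gg, x⟫ + (μ / 2) * ‖x‖ ^ 2) - (⟪gg, u⟫ + (μ / 2) * ‖u‖ ^ 2)
        + (1 / β) * W (t + 1) - W t ≤ Q := by
      rw [key, hQ]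
      have hrw : (1 - β) * N / (2 * η) * ‖u‖ ^ 2 = (1 - β) * N * ‖u‖ ^ 2 / (2 * η) := by ring
      linarith [young, hZ]
    linarith [this]
  -- summation
  have hpow : ∀ t : ℕ, (0:ℝ) ≤ β ^ (T - t) := fun t => pow_nonneg hβ0.le _
  have hsum1 : ∑ t ∈ Finset.Icc 1 T, β ^ (T - t) *
        ((⟪g t, U t⟫ + (μ / 2) * ‖U t‖ ^ 2) - (⟪g t, u⟫ + (μ / 2) * ‖u‖ ^ 2))
      ≤ ∑ t ∈ Finset.Icc 1 T, β ^ (T - t) * (Q + W t - (1 / β) * W (t + 1)) := by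
    apply Finset.sum_le_sum
    intro t _
    exact mul_le_mul_of_nonneg_left (hstep t) (hpow t)
  -- split the sum
  have hsplit : ∑ t ∈ Finset.Icc 1 T, β ^ (T - t) * (Q + W t - (1 / β) * W (t + 1))
      = Q * ∑ t ∈ Finset.Icc 1 T, β ^ (T - t)
        + ∑ t ∈ Finset.Icc 1 T, (β ^ (T - t) * W t - β ^ (T - t) * (1 / β) * W (t + 1)) := by
    rw [Finset.mul_sum, ← Finset.sum_add_distrib]
    apply Finset.sum_congr rfl
    intro t _
    ring
  -- telescoping bound
  have htel : ∑ t ∈ Finset.Icc 1 T, (β ^ (T - t) * W t - β ^ (T - t) * (1 / β) * W (t + 1))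
      ≤ β ^ (T - 1) * W 1 := by
    have hterm : ∀ t, 1 ≤ t → t ≤ T →
        β ^ (T - t) * W t - β ^ (T - t) * (1 / β) * W (t + 1)
          ≤ β ^ (T - t) * W t - β ^ (T - (t + 1)) * W (t + 1) := by
      intro t ht1 htT
      have : β ^ (T - (t + 1)) * W (t + 1) ≤ β ^ (T - t) * (1 / β) * W (t + 1) := by
        apply mul_le_mul_of_nonneg_right _ (hW0 (t + 1))
        rcases lt_or_eq_of_le htT with hlt | heq
        · have : T - t = (T - (t + 1)) + 1 := by omega
          rw [this, pow_succ]
          rw [mul_assoc, mul_one_div, div_self hβne, mul_one]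
        · subst heq
          have h1 : t - t = 0 := by omega
          have h2 : t - (t + 1) = 0 := by omega
          rw [h1, h2, pow_zero]
          rw [one_mul, le_div_iff₀ hβ0, one_mul]
          linarith
      linarith
    have step1 : ∑ t ∈ Finset.Icc 1 T, (β ^ (T - t) * W t - β ^ (T - t) * (1 / β) * W (t + 1))
        ≤ ∑ t ∈ Finset.Icc 1 T, (β ^ (T - t) * W t - β ^ (T - (t + 1)) * W (t + 1)) := by
      apply Finset.sum_le_sum
      intro t ht
      obtain ⟨ht1, htT⟩ := Finset.mem_Icc.mp ht
      exact hterm t ht1 htT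
    have step2 : ∑ t ∈ Finset.Icc 1 T, (β ^ (T - t) * W t - β ^ (T - (t + 1)) * W (t + 1))
        = β ^ (T - (1 + 0)) * W (1 + 0) - β ^ (T - (1 + T)) * W (1 + T) := by
      rw [← Finset.Ico_add_one_right_eq_Icc, Finset.sum_Ico_eq_sum_range]
      exact Finset.sum_range_sub' (fun i => β ^ (T - (1 + i)) * W (1 + i)) T
    calc ∑ t ∈ Finset.Icc 1 T, (β ^ (T - t) * W t - β ^ (T - t) * (1 / β) * W (t + 1))
        ≤ β ^ (T - (1 + 0)) * W (1 + 0) - β ^ (T - (1 + T)) * W (1 + T) :=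
          step1.trans (le_of_eq step2)
      _ ≤ β ^ (T - 1) * W 1 := by
          have h1 : (1:ℕ) + 0 = 1 := rfl
          have h2 : 0 ≤ β ^ (T - (1 + T)) * W (1 + T) :=
            mul_nonneg (pow_nonneg hβ0.le _) (hW0 (1 + T))
          rw [h1]
          linarith
  -- geometric sum
  have hgeom : ∑ t ∈ Finset.Icc 1 T, β ^ (T - t) = (1 - β ^ T) / (1 - β) := by
    rw [← Finset.Ico_add_one_right_eq_Icc, Finset.sum_Ico_eq_sum_range]
    show ∑ i ∈ Finset.range T, β ^ (T - (1 + i)) = (1 - β ^ T) / (1 - β)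
    have hre : ∑ i ∈ Finset.range T, β ^ (T - (1 + i)) = ∑ i ∈ Finset.range T, β ^ i := by
      have := Finset.sum_range_reflect (fun j => β ^ j) T
      rw [← this]
      apply Finset.sum_congr rfl
      intro i hi
      have : T - (1 + i) = T - 1 - i := by omega
      rw [this]
    rw [hre, geom_sum_eq (ne_of_lt hβ1)]
    have h1 : β - 1 ≠ 0 := by linarith
    have h2 : 1 - β ≠ 0 := by linarith
    field_simp
    ring
  -- W 1
  have hW1 : W 1 = N * β / (2 * η) * ‖u‖ ^ 2 := by
    simp only [hW, hU1]
    rw [zero_sub, norm_neg, eC, norm_zero]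
    field_simp
    ring
  -- putting it together
  have hQ0 : 0 ≤ Q := by
    have h1 : 0 ≤ (1 - β) * N * ‖u‖ ^ 2 / (2 * η) := by positivity
    have h2 : 0 ≤ η / 2 * (G ^ 2 + σ ^ 2) := by positivity
    simp only [hQ]; linarith
  have hβT1 : β ^ (T - 1) * β = β ^ T := by
    have : T - 1 + 1 = T := by omega
    rw [← pow_succ, this]
  have hβT0 : 0 < β ^ T := pow_pos hβ0 T
  have hβT : β ^ T ≤ β := by
    calc β ^ T ≤ β ^ 1 := pow_le_pow_of_le_one hβ0.le hβ1.le hT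
    _ = β := pow_one β
  have hmain : Q * ((1 - β ^ T) / (1 - β)) + β ^ (T - 1) * W 1
      ≤ N * ‖u‖ ^ 2 / (2 * η) + η * (G ^ 2 + σ ^ 2) / (2 * (1 - β)) := by
    rw [hW1, hQ]
    have hexp : ((1 - β) * N * ‖u‖ ^ 2 / (2 * η) + η / 2 * (G ^ 2 + σ ^ 2)) * ((1 - β ^ T) / (1 - β))
        + β ^ (T - 1) * (N * β / (2 * η) * ‖u‖ ^ 2)
        = N * ‖u‖ ^ 2 / (2 * η) + (1 - β ^ T) * (η * (G ^ 2 + σ ^ 2) / (2 * (1 - β))) := by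
      rw [← hβT1]
      field_simp
      ring
    rw [hexp]
    have h1 : (1 - β ^ T) * (η * (G ^ 2 + σ ^ 2) / (2 * (1 - β))) ≤ η * (G ^ 2 + σ ^ 2) / (2 * (1 - β)) := by
      have hc : 0 ≤ η * (G ^ 2 + σ ^ 2) / (2 * (1 - β)) := by positivity
      have hq : 0 ≤ β ^ T * (η * (G ^ 2 + σ ^ 2) / (2 * (1 - β))) :=
        mul_nonneg (pow_nonneg hβ0.le T) hc
      have hexpand : (1 - β ^ T) * (η * (G ^ 2 + σ ^ 2) / (2 * (1 - β)))
          = η * (G ^ 2 + σ ^ 2) / (2 * (1 - β)) - β ^ T * (η * (G ^ 2 + σ ^ 2) / (2 * (1 - β))) := by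
        ring
      rw [hexpand]
      linarith
    linarith
  have hfin : N * ‖u‖ ^ 2 / (2 * η) + η * (G ^ 2 + σ ^ 2) / (2 * (1 - β))
      ≤ 2 * ‖u‖ * (G + σ) / (β * s) + (μ / 2) * ‖u‖ ^ 2 := by
    have hη' : η = 2 / (G + σ) * ‖u‖ * s := hη
    have hsplitN : N * ‖u‖ ^ 2 / (2 * η) = ‖u‖ ^ 2 / (2 * η) + (μ / 2) * ‖u‖ ^ 2 := by
      rw [hN]; field_simp
    rw [hsplitN]
    have h1 : ‖u‖ ^ 2 / (2 * η) = ‖u‖ * (G + σ) / (4 * s) := by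
      rw [hη']; field_simp; ring
    have h2 : η * (G ^ 2 + σ ^ 2) / (2 * (1 - β)) = ‖u‖ * (G ^ 2 + σ ^ 2) / ((G + σ) * s) := by
      rw [hη', ← hs2]; field_simp
    rw [h1, h2]
    have hkey : ‖u‖ * (G + σ) / (4 * s) + ‖u‖ * (G ^ 2 + σ ^ 2) / ((G + σ) * s)
        ≤ 2 * ‖u‖ * (G + σ) / (β * s) := by
      rw [div_add_div _ _ (by positivity) (by positivity),
        div_le_div_iff₀ (by positivity) (by positivity)]
      have hGσ2 : G ^ 2 + σ ^ 2 ≤ (G + σ) ^ 2 := by nlinarith [mul_pos hG hσ]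
      have h5 : β * ((G + σ) ^ 2 + 4 * (G ^ 2 + σ ^ 2)) ≤ 8 * (G + σ) ^ 2 := by
        nlinarith [mul_pos hG hσ, sq_nonneg (G + σ)]
      have h7 := mul_le_mul_of_nonneg_left h5 (show (0:ℝ) ≤ s * s * ‖u‖ by positivity)
      linarith [h7]
    linarith
  calc ∑ t ∈ Finset.Icc 1 T, β ^ (T - t) *
        ((⟪g t, U t⟫ + (μ / 2) * ‖U t‖ ^ 2) - (⟪g t, u⟫ + (μ / 2) * ‖u‖ ^ 2))
      ≤ Q * ∑ t ∈ Finset.Icc 1 T, β ^ (T - t)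
        + ∑ t ∈ Finset.Icc 1 T, (β ^ (T - t) * W t - β ^ (T - t) * (1 / β) * W (t + 1)) := by
        rw [← hsplit]; exact hsum1
    _ ≤ Q * ((1 - β ^ T) / (1 - β)) + β ^ (T - 1) * W 1 := by
        rw [hgeom]; linarith [htel]
    _ ≤ N * ‖u‖ ^ 2 / (2 * η) + η * (G ^ 2 + σ ^ 2) / (2 * (1 - β)) := hmain
    _ ≤ 2 * ‖u‖ * (G + σ) / (β * s) + (μ / 2) * ‖u‖ ^ 2 := hfin
end
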